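/- arXiv:2403.10247 — 3 statements merged into one kernel-verified Lean document; each statement's English description precedes it below -/
import Mathlib

section
/- Let T be a bounded operator with closed range on a complex Hilbert space and let T = U − V be a proper splitting, i.e., ran(U) = ran(T) and ker(U) = ker(V) (equivalently ker(U) = ker(T)). Then (U† T)† = T† U. -/
open ContinuousLinearMap

/-- `Td` is the Moore–Penrose inverse of `T`. -/
def IsMoorePenroseInverse {H : Type*} [NormedAddCommGroup H] [InnerProductSpace ℂ H]
    [CompleteSpace H] (T Td : H →L[ℂ] H) : Prop :=
  T ∘L Td ∘L T = T ∧ Td ∘L T ∘L Td = Td ∧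
    IsSelfAdjoint (T ∘L Td) ∧ IsSelfAdjoint (Td ∘L T)

/-!
Since `ran U = ran T`, the orthogonal projections `T T†` and `U U†` onto this common range
coincide. Hence `(U† T)(T† U) = U† U` and `(T† U)(U† T) = T† T` are self-adjoint, and the two
remaining Penrose equations follow by absorbing `U† U U† = U†` and `T† T T† = T†`. So `T† U`
is a Moore–Penrose inverse of `U† T`, and Moore–Penrose inverses are unique.
-/

theorem IsSelfAdjoint.eq_of_mul_eq_of_mul_eq {R : Type*} [Mul R] [StarMul R] {P Q : R}
    (hP : IsSelfAdjoint P) (hQ : IsSelfAdjoint Q) (hPQ : P * Q = Q) (hQP : Q * P = P) :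
    P = Q :=
  calc P = star (Q * P) := by rw [hQP, hP.star_eq]
    _ = P * Q := by rw [star_mul, hP.star_eq, hQ.star_eq]
    _ = Q := hPQ

namespace IsMoorePenroseInverse

variable {H : Type*} [NormedAddCommGroup H] [InnerProductSpace ℂ H] [CompleteSpace H]
  {T Td : H →L[ℂ] H}

theorem _root_.isMoorePenroseInverse_iff_mul :
    IsMoorePenroseInverse T Td ↔ T * Td * T = T ∧ Td * T * Td = Td ∧
      IsSelfAdjoint (T * Td) ∧ IsSelfAdjoint (Td * T) := by
  simp only [IsMoorePenroseInverse, mul_assoc]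
  rfl

theorem self_mul_mul_self (h : IsMoorePenroseInverse T Td) : T * Td * T = T :=
  (isMoorePenroseInverse_iff_mul.mp h).1

theorem mul_self_mul (h : IsMoorePenroseInverse T Td) : Td * T * Td = Td :=
  (isMoorePenroseInverse_iff_mul.mp h).2.1

theorem isSelfAdjoint_self_mul (h : IsMoorePenroseInverse T Td) : IsSelfAdjoint (T * Td) :=
  (isMoorePenroseInverse_iff_mul.mp h).2.2.1

theorem isSelfAdjoint_mul_self (h : IsMoorePenroseInverse T Td) : IsSelfAdjoint (Td * T) :=
  (isMoorePenroseInverse_iff_mul.mp h).2.2.2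

theorem unique {X Y : H →L[ℂ] H} (hX : IsMoorePenroseInverse T X)
    (hY : IsMoorePenroseInverse T Y) : X = Y := by
  have saTX : star (T * X) = T * X := hX.isSelfAdjoint_self_mul
  have saXT : star (X * T) = X * T := hX.isSelfAdjoint_mul_self
  have saTY : star (T * Y) = T * Y := hY.isSelfAdjoint_self_mul
  have saYT : star (Y * T) = Y * T := hY.isSelfAdjoint_mul_self
  have hTX : T * X = T * Y :=
    calc T * X = star (T * Y * T * X) := by rw [hY.self_mul_mul_self, saTX]
      _ = star (T * X) * star (T * Y) := by simp only [star_mul, mul_assoc]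
      _ = T * Y := by rw [saTX, saTY, ← mul_assoc, hX.self_mul_mul_self]
  have hXT : X * T = Y * T :=
    calc X * T = star (X * T * Y * T) := by
          rw [mul_assoc X, mul_assoc, hY.self_mul_mul_self, saXT]
      _ = star (Y * T) * star (X * T) := by simp only [star_mul, mul_assoc]
      _ = Y * T := by rw [saXT, saYT, mul_assoc, ← mul_assoc T, hX.self_mul_mul_self]
  calc X = X * T * X := hX.mul_self_mul.symm
    _ = Y * T * Y := by rw [hXT, mul_assoc, hTX, ← mul_assoc]
    _ = Y := hY.mul_self_mul

theorem self_mul_mul_eq_of_range_le (h : IsMoorePenroseInverse T Td) {U : H →L[ℂ] H}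
    (hUT : LinearMap.range (U : H →ₗ[ℂ] H) ≤ LinearMap.range (T : H →ₗ[ℂ] H)) :
    T * Td * U = U := by
  ext x
  obtain ⟨w, hw⟩ : U x ∈ LinearMap.range (T : H →ₗ[ℂ] H) := hUT ⟨x, rfl⟩
  change T w = U x at hw
  calc (T * Td * U) x = (T * Td * T) w := congrArg (T * Td) hw.symm
    _ = U x := by rw [h.self_mul_mul_self, hw]

theorem self_mul_eq_of_range_eq {U Ud : H →L[ℂ] H} (hTd : IsMoorePenroseInverse T Td)
    (hUd : IsMoorePenroseInverse U Ud)
    (hran : LinearMap.range (U : H →ₗ[ℂ] H) = LinearMap.range (T : H →ₗ[ℂ] H)) :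
    T * Td = U * Ud := by
  refine hTd.isSelfAdjoint_self_mul.eq_of_mul_eq_of_mul_eq hUd.isSelfAdjoint_self_mul ?_ ?_
  · rw [← mul_assoc, hTd.self_mul_mul_eq_of_range_le hran.le]
  · rw [← mul_assoc, hUd.self_mul_mul_eq_of_range_le hran.ge]

theorem comp_of_self_mul_eq {U Ud : H →L[ℂ] H} (hTd : IsMoorePenroseInverse T Td)
    (hUd : IsMoorePenroseInverse U Ud) (hproj : T * Td = U * Ud) :
    IsMoorePenroseInverse (Ud ∘L T) (Td ∘L U) := by
  have hUdT_TdU : Ud * T * (Td * U) = Ud * U :=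
    calc Ud * T * (Td * U) = Ud * (U * Ud) * U := by rw [← hproj]; noncomm_ring
      _ = Ud * U := by rw [← mul_assoc, hUd.mul_self_mul]
  have hTdU_UdT : Td * U * (Ud * T) = Td * T :=
    calc Td * U * (Ud * T) = Td * (T * Td) * T := by rw [hproj]; noncomm_ring
      _ = Td * T := by rw [← mul_assoc, hTd.mul_self_mul]
  refine isMoorePenroseInverse_iff_mul.mpr ⟨?_, ?_, ?_, ?_⟩
  · change Ud * T * (Td * U) * (Ud * T) = Ud * T
    rw [hUdT_TdU, ← mul_assoc, hUd.mul_self_mul]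
  · change Td * U * (Ud * T) * (Td * U) = Td * U
    rw [hTdU_UdT, ← mul_assoc, hTd.mul_self_mul]
  · exact hUdT_TdU ▸ hUd.isSelfAdjoint_mul_self
  · exact hTdU_UdT ▸ hTd.isSelfAdjoint_mul_self

end IsMoorePenroseInverse

theorem mp_of_Ud_comp_T_eq_Td_comp_U_general
    {H : Type*} [NormedAddCommGroup H] [InnerProductSpace ℂ H] [CompleteSpace H]
    (T U Ud Td X : H →L[ℂ] H)
    (hran : LinearMap.range (U : H →ₗ[ℂ] H) = LinearMap.range (T : H →ₗ[ℂ] H))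
    (hUd : IsMoorePenroseInverse U Ud) (hTd : IsMoorePenroseInverse T Td)
    (hX : IsMoorePenroseInverse (Ud ∘L T) X) :
    X = Td ∘L U :=
  hX.unique (hTd.comp_of_self_mul_eq hUd (hTd.self_mul_eq_of_range_eq hUd hran))

/-- For a proper splitting `T = U - V` of a closed range operator, `(U† T)† = T† U`. -/
theorem mp_of_Ud_comp_T_eq_Td_comp_U
    {H : Type*} [NormedAddCommGroup H] [InnerProductSpace ℂ H] [CompleteSpace H]
    (T U V Ud Td X : H →L[ℂ] H)
    (hTcr : IsClosed (LinearMap.range (T : H →ₗ[ℂ] H) : Set H))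
    (hsplit : T = U - V)
    (hran : LinearMap.range (U : H →ₗ[ℂ] H) = LinearMap.range (T : H →ₗ[ℂ] H))
    (hker : LinearMap.ker (U : H →ₗ[ℂ] H) = LinearMap.ker (T : H →ₗ[ℂ] H))
    (hUd : IsMoorePenroseInverse U Ud) (hTd : IsMoorePenroseInverse T Td)
    (hX : IsMoorePenroseInverse (Ud ∘L T) X) :
    X = Td ∘L U :=
  mp_of_Ud_comp_T_eq_Td_comp_U_general T U Ud Td X hran hUd hTd hX
end

section
/- Let T be a bounded operator with closed range on a complex Hilbert space such that T = P Q for orthogonal projections P, Q (so T = P_T P_{T*}). Then ‖P_{T*}(I − T)‖ < 1; in particular, the Q_T-proper splitting of T converges. -/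
/-!
On `ran P = ran T*` the operator `T = P₁P₂` acts as `P₁`, because `ran T* ⊆ ran P₂`. Hence for
`y = P x` we get `P(I - T)x = P(y - P₁y)`, and Pythagoras gives
`‖P(I - T)x‖² ≤ ‖P x‖² - ‖T x‖²`. As `T` has closed range and `ker P = ker T`, the open mapping
theorem bounds `‖P x‖ ≤ C‖T x‖`, which turns this into `‖P(I - T)‖ < 1`.
For the splitting, `Q⁺Q` is the orthogonal projection with kernel `ker Q = ker T = ker P`, so
`Q⁺Q = P`; together with `QT = T` this makes the iteration operator `Q⁺(Q - T)` equal to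
`P(I - T)`, whose spectral radius is at most its norm.
-/

open ContinuousLinearMap

namespace ContinuousLinearMap

section Banach

variable {𝕜 E F G : Type*} [NontriviallyNormedField 𝕜]
  [NormedAddCommGroup E] [NormedSpace 𝕜 E] [CompleteSpace E]
  [NormedAddCommGroup F] [NormedSpace 𝕜 F] [CompleteSpace F]
  [NormedAddCommGroup G] [NormedSpace 𝕜 G]

theorem exists_preimage_norm_le_of_isClosed_range (f : E →L[𝕜] F)
    (hf : IsClosed (f.range : Set F)) :
    ∃ C > 0, ∀ x, ∃ x', f x' = f x ∧ ‖x'‖ ≤ C * ‖f x‖ := by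
  have : CompleteSpace f.range := hf.completeSpace_coe
  obtain ⟨C, hC, h⟩ :=
    f.rangeRestrict.exists_preimage_norm_le fun ⟨_, x, hx⟩ ↦ ⟨x, by ext; exact hx⟩
  refine ⟨C, hC, fun x ↦ ?_⟩
  obtain ⟨x', hx', hle⟩ := h (f.rangeRestrict x)
  exact ⟨x', congrArg Subtype.val hx', hle⟩

theorem exists_norm_le_mul_norm_of_ker_le (f : E →L[𝕜] F) (hf : IsClosed (f.range : Set F))
    (g : E →L[𝕜] G) (hfg : f.ker ≤ g.ker) : ∃ C, ∀ x, ‖g x‖ ≤ C * ‖f x‖ := by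
  obtain ⟨C, -, h⟩ := f.exists_preimage_norm_le_of_isClosed_range hf
  refine ⟨‖g‖ * C, fun x ↦ ?_⟩
  obtain ⟨x', hx', hle⟩ := h x
  have hgx : g x = g x' := by
    simpa [sub_eq_zero] using hfg (show x - x' ∈ f.ker by simp [hx'])
  calc ‖g x‖ = ‖g x'‖ := by rw [hgx]
    _ ≤ ‖g‖ * ‖x'‖ := g.le_opNorm x'
    _ ≤ ‖g‖ * C * ‖f x‖ := by rw [mul_assoc]; gcongr

end Banach

theorem opNorm_lt_one_of_forall_norm_sq_le {𝕜 E F : Type*} [NontriviallyNormedField 𝕜]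
    [NormedAddCommGroup E] [NormedSpace 𝕜 E] [NormedAddCommGroup F] [NormedSpace 𝕜 F]
    (A : E →L[𝕜] F) {k : ℝ} (hk₀ : 0 ≤ k) (hk₁ : k < 1) (h : ∀ x, ‖A x‖ ^ 2 ≤ k * ‖x‖ ^ 2) :
    ‖A‖ < 1 := by
  refine (A.opNorm_le_bound (Real.sqrt_nonneg k) fun x ↦ ?_).trans_lt
    ((Real.sqrt_lt' one_pos).mpr (by rwa [one_pow]))
  rw [← pow_le_pow_iff_left₀ (norm_nonneg _) (by positivity) two_ne_zero, mul_pow,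
    Real.sq_sqrt hk₀]
  exact h x

theorem spectralRadius_le_nnnorm {𝕜 E : Type*} [NontriviallyNormedField 𝕜]
    [NormedAddCommGroup E] [NormedSpace 𝕜 E] [CompleteSpace E] (a : E →L[𝕜] E) :
    spectralRadius 𝕜 a ≤ ‖a‖₊ := by
  rcases subsingleton_or_nontrivial E with _ | _
  · simp
  · exact spectrum.spectralRadius_le_nnnorm a

namespace IsIdempotentElem

variable {R M N : Type*} [Ring R] [TopologicalSpace M] [AddCommGroup M] [Module R M]
  [TopologicalSpace N] [AddCommGroup N] [Module R N] {q : M →L[R] M}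

theorem comp_eq_left_iff (hq : IsIdempotentElem q) (p : M →L[R] N) :
    p ∘L q = p ↔ q.ker ≤ p.ker := by
  simpa [← coe_inj] using
    LinearMap.IsIdempotentElem.comp_eq_left_iff hq.toLinearMap (p : M →ₗ[R] N)

theorem comp_eq_right_iff (hq : IsIdempotentElem q) (p : N →L[R] M) :
    q ∘L p = p ↔ p.range ≤ q.range := by
  simpa [← coe_inj] using
    LinearMap.IsIdempotentElem.comp_eq_right_iff hq.toLinearMap (p : N →ₗ[R] M)

end IsIdempotentElem

section Hilbert

open scoped InnerProductSpace

variable {𝕜 E F : Type*} [RCLike 𝕜]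
  [NormedAddCommGroup E] [InnerProductSpace 𝕜 E] [CompleteSpace E]
  [NormedAddCommGroup F] [InnerProductSpace 𝕜 F] [CompleteSpace F]

theorem ker_eq_ker_of_range_adjoint_eq {A B : E →L[𝕜] F}
    (h : (adjoint A).range = (adjoint B).range) : A.ker = B.ker := by
  rw [← adjoint_adjoint A, ← adjoint_adjoint B, ← orthogonal_range, ← orthogonal_range, h]

theorem IsStarProjection.norm_sq_apply_add_norm_sq_sub_apply {p : E →L[𝕜] E}
    (hp : IsStarProjection p) (x : E) : ‖p x‖ ^ 2 + ‖x - p x‖ ^ 2 = ‖x‖ ^ 2 := by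
  have hpp : p (p x) = p x := congr($(hp.isIdempotentElem.eq) x)
  have horth : ⟪p x, x - p x⟫_𝕜 = 0 := by
    rw [← adjoint_inner_right, hp.isSelfAdjoint.adjoint_eq, map_sub, hpp, sub_self,
      inner_zero_right]
  simpa [sq] using (norm_add_sq_eq_norm_sq_add_norm_sq_of_inner_eq_zero _ _ horth).symm

theorem IsStarProjection.norm_apply_le {p : E →L[𝕜] E} (hp : IsStarProjection p) (x : E) :
    ‖p x‖ ≤ ‖x‖ :=
  (p.le_of_opNorm_le (IsStarProjection.norm_le p hp) x).trans_eq (one_mul _)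

theorem IsStarProjection.eq_of_ker_eq {p q : E →L[𝕜] E} (hp : IsStarProjection p)
    (hq : IsStarProjection q) (h : p.ker = q.ker) : p = q := by
  have hpq : p * q = p := (hq.isIdempotentElem.comp_eq_left_iff p).mpr h.ge
  have hqp : q * p = q := (hp.isIdempotentElem.comp_eq_left_iff q).mpr h.le
  calc p = star p := hp.isSelfAdjoint.star_eq.symm
    _ = q := by rw [← hpq, star_mul, hp.isSelfAdjoint.star_eq, hq.isSelfAdjoint.star_eq, hqp]

variable {T P P₁ : E →L[𝕜] E}

theorem norm_comp_one_sub_apply_sq_le (hP₁ : IsStarProjection P₁) (hP : IsStarProjection P)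
    (hP₁P : P₁ ∘L P = T) (x : E) :
    ‖(P ∘L (1 - T)) x‖ ^ 2 ≤ ‖P x‖ ^ 2 - ‖T x‖ ^ 2 := by
  set y := P x
  have hPy : P y = y := congr($(hP.isIdempotentElem.eq) x)
  have hP₁y : P₁ y = T x := congr($hP₁P x)
  have hPx : (P ∘L (1 - T)) x = P (y - P₁ y) := by
    simp [map_sub, hPy, hP₁y, y]
  calc ‖(P ∘L (1 - T)) x‖ ^ 2 = ‖P (y - P₁ y)‖ ^ 2 := by rw [hPx]
    _ ≤ ‖y - P₁ y‖ ^ 2 := by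
        gcongr
        exact hP.norm_apply_le _
    _ = ‖y‖ ^ 2 - ‖T x‖ ^ 2 := by
        rw [← hP₁y, ← hP₁.norm_sq_apply_add_norm_sq_sub_apply y]
        ring

theorem norm_comp_one_sub_lt_one (hP₁ : IsStarProjection P₁) (hP : IsStarProjection P)
    (hP₁P : P₁ ∘L P = T) {C : ℝ} (hC : ∀ x, ‖P x‖ ≤ C * ‖T x‖) :
    ‖P ∘L (1 - T)‖ < 1 := by
  refine opNorm_lt_one_of_forall_norm_sq_le _ (k := C ^ 2 / (1 + C ^ 2)) (by positivity)
    ((div_lt_one (by positivity)).mpr (by linarith)) fun x ↦ ?_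
  have hA := norm_comp_one_sub_apply_sq_le hP₁ hP hP₁P x
  have hPT : ‖P x‖ ^ 2 ≤ C ^ 2 * ‖T x‖ ^ 2 := by
    rw [← mul_pow]; exact pow_le_pow_left₀ (norm_nonneg _) (hC x) 2
  have hPx : ‖P x‖ ^ 2 ≤ ‖x‖ ^ 2 := by
    gcongr
    exact hP.norm_apply_le x
  -- with `a = ‖P x‖²`, `t = ‖T x‖²`: `(1 + C²)(a - t) ≤ C² a` because `a ≤ C² t`
  rw [div_mul_eq_mul_div, le_div_iff₀ (by positivity)]
  nlinarith [sq_nonneg C, sq_nonneg ‖T x‖]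

end Hilbert

end ContinuousLinearMap

namespace IsMoorePenroseInverse

variable {H : Type*} [NormedAddCommGroup H] [InnerProductSpace ℂ H] [CompleteSpace H]
  {Q Qd : H →L[ℂ] H}

theorem isStarProjection_comp (h : IsMoorePenroseInverse Q Qd) : IsStarProjection (Qd ∘L Q) :=
  ⟨show (Qd ∘L Q) ∘L (Qd ∘L Q) = Qd ∘L Q by rw [← comp_assoc, comp_assoc Qd Q Qd, h.2.1], h.2.2.2⟩

theorem ker_comp (h : IsMoorePenroseInverse Q Qd) : (Qd ∘L Q).ker = Q.ker := by
  refine le_antisymm ?_ (LinearMap.ker_le_ker_comp _ _)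
  calc (Qd ∘L Q).ker ≤ (Q ∘L Qd ∘L Q).ker := LinearMap.ker_le_ker_comp _ _
    _ = Q.ker := by rw [h.1]

end IsMoorePenroseInverse

/-- If `T` is a closed range product of two orthogonal projections then
`‖P_{T*}(I - T)‖ < 1`, and the `Q_T`-proper splitting of `T` converges. -/
theorem Q_proper_splitting_of_product_of_projections
    {H : Type*} [NormedAddCommGroup H] [InnerProductSpace ℂ H] [CompleteSpace H]
    (T P1 P2 Q Qd P : H →L[ℂ] H)
    (hTcr : IsClosed (LinearMap.range (T : H →ₗ[ℂ] H) : Set H))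
    (hP1 : IsSelfAdjoint P1) (hP12 : P1 ∘L P1 = P1)
    (hP2 : IsSelfAdjoint P2) (hP22 : P2 ∘L P2 = P2)
    (hT : T = P1 ∘L P2)
    -- Q is the oblique projection onto ran T along ker T
    (hQ2 : Q ∘L Q = Q)
    (hQran : LinearMap.range (Q : H →ₗ[ℂ] H) = LinearMap.range (T : H →ₗ[ℂ] H))
    (hQker : LinearMap.ker (Q : H →ₗ[ℂ] H) = LinearMap.ker (T : H →ₗ[ℂ] H))
    (hQd : IsMoorePenroseInverse Q Qd)
    -- P is the orthogonal projection onto ran T*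
    (hP : IsSelfAdjoint P) (hPP : P ∘L P = P)
    (hPran : LinearMap.range (P : H →ₗ[ℂ] H) = LinearMap.range ((adjoint T : H →L[ℂ] H) : H →ₗ[ℂ] H)) :
    ‖P ∘L (1 - T)‖ < 1 ∧ spectralRadius ℂ (Qd ∘L (Q - T)) < 1 := by
  have hP' : IsStarProjection P := ⟨hPP, hP⟩
  have hkerP : P.ker = T.ker := ker_eq_ker_of_range_adjoint_eq (by rwa [hP.adjoint_eq])
  have hTP : T ∘L P = T := (hP'.isIdempotentElem.comp_eq_left_iff T).mpr hkerP.le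
  have hP2P : P2 ∘L P = P := by
    refine (IsIdempotentElem.comp_eq_right_iff hP22 P).mpr ?_
    rw [hPran, hT, adjoint_comp, hP1.adjoint_eq, hP2.adjoint_eq]
    exact LinearMap.range_comp_le_range _ _
  have hP1P : P1 ∘L P = T := by rw [← hTP, hT, comp_assoc, hP2P]
  obtain ⟨C, hC⟩ := T.exists_norm_le_mul_norm_of_ker_le hTcr P hkerP.ge
  have hnorm : ‖P ∘L (1 - T)‖ < 1 := norm_comp_one_sub_lt_one ⟨hP12, hP1⟩ hP' hP1P hC
  have hQdQ : Qd ∘L Q = P :=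
    hQd.isStarProjection_comp.eq_of_ker_eq hP' (by rw [hQd.ker_comp, hQker, hkerP])
  have hQT : Q ∘L T = T := (IsIdempotentElem.comp_eq_right_iff hQ2 T).mpr hQran.ge
  have hsplit : Qd ∘L (Q - T) = P ∘L (1 - T) := by
    calc Qd ∘L (Q - T) = Qd ∘L Q - (Qd ∘L Q) ∘L T := by rw [comp_sub, comp_assoc, hQT]
      _ = P ∘L (1 - T) := by rw [hQdQ, comp_sub, one_def, comp_id]
  exact ⟨hnorm, hsplit ▸ (spectralRadius_le_nnnorm _).trans_lt (by exact_mod_cast hnorm)⟩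
end

section
/- Let S, T be self-adjoint closed range operators on a complex Hilbert space with S ≤* T (star order: S = P_S T = T P_S). If ‖P_T − T²‖ < 1 then ‖P_S − S²‖ < 1; i.e., convergence of the MP-proper splitting of T implies convergence of the MP-proper splitting of S. -/
open ContinuousLinearMap

/-! With `P_S` idempotent and `P_T P_S = P_S`, the star order `S = P_S T = T P_S` gives
`P_S - S² = P_S (P_T - T²) P_S`, and compressing by an orthogonal projection does not
increase the norm. -/

theorem IsIdempotentElem.sub_mul_self_eq_mul_sub_mul_self_mul {R : Type*} [Ring R]
    {p q s t : R} (hp : IsIdempotentElem p) (hqp : q * p = p)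
    (hs_left : s = p * t) (hs_right : s = t * p) :
    p - s * s = p * (q - t * t) * p := by
  have hpqp : p * q * p = p := by rw [mul_assoc, hqp, hp.eq]
  have hss : s * s = p * (t * t) * p := by
    nth_rewrite 1 [hs_left]
    rw [hs_right]
    simp only [mul_assoc]
  rw [hss, mul_sub, sub_mul, hpqp]

theorem IsStarProjection.norm_mul_mul_self_le {E : Type*} [NonUnitalNormedRing E] [StarRing E]
    [CStarRing E] {p : E} (hp : IsStarProjection p) (x : E) : ‖p * x * p‖ ≤ ‖x‖ :=
  calc ‖p * x * p‖ ≤ ‖p‖ * ‖x‖ * ‖p‖ := norm_mul₃_le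
    _ ≤ 1 * ‖x‖ * 1 := by gcongr <;> exact hp.norm_le p
    _ = ‖x‖ := by ring

theorem ContinuousLinearMap.mul_eq_right_of_range_le {R M : Type*} [Semiring R]
    [AddCommMonoid M] [Module R M] [TopologicalSpace M] {p q : M →L[R] M}
    (hq : IsIdempotentElem q) (h : LinearMap.range (p : M →ₗ[R] M) ≤ LinearMap.range (q : M →ₗ[R] M)) :
    q * p = p :=
  coe_inj.mp <| (LinearMap.IsIdempotentElem.comp_eq_right_iff hq.toLinearMap _).mpr h

theorem MP_splitting_star_order_general
    {H : Type*} [NormedAddCommGroup H] [InnerProductSpace ℂ H] [CompleteSpace H]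
    (S T PS PT : H →L[ℂ] H)
    -- PS, PT orthogonal projections onto ran S, ran T
    (hPS : IsSelfAdjoint PS) (hPS2 : PS ∘L PS = PS)
    (hPSran : LinearMap.range (PS : H →ₗ[ℂ] H) = LinearMap.range (S : H →ₗ[ℂ] H))
    (hPT2 : PT ∘L PT = PT)
    (hPTran : LinearMap.range (PT : H →ₗ[ℂ] H) = LinearMap.range (T : H →ₗ[ℂ] H))
    -- star order
    (hstar1 : S = PS ∘L T) (hstar2 : S = T ∘L PS)
    (hconv : ‖PT - T ∘L T‖ < 1) :
    ‖PS - S ∘L S‖ < 1 := by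
  have hPS_proj : IsStarProjection PS := ⟨hPS2, hPS⟩
  have hrange : LinearMap.range (PS : H →ₗ[ℂ] H) ≤ LinearMap.range (PT : H →ₗ[ℂ] H) := by
    rw [hPSran, hPTran, hstar2]
    exact LinearMap.range_comp_le_range (PS : H →ₗ[ℂ] H) (T : H →ₗ[ℂ] H)
  have hPT_PS : PT * PS = PS := mul_eq_right_of_range_le hPT2 hrange
  calc ‖PS - S ∘L S‖ = ‖PS * (PT - T * T) * PS‖ :=
        congrArg norm (hPS_proj.isIdempotentElem.sub_mul_self_eq_mul_sub_mul_self_mul hPT_PS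
          hstar1 hstar2)
    _ ≤ ‖PT - T ∘L T‖ := hPS_proj.norm_mul_mul_self_le _
    _ < 1 := hconv

/-- For self-adjoint closed range operators with `S ≤* T` (star order), convergence of the
MP-proper splitting of `T` implies convergence of the MP-proper splitting of `S`. -/
theorem MP_splitting_star_order
    {H : Type*} [NormedAddCommGroup H] [InnerProductSpace ℂ H] [CompleteSpace H]
    (S T PS PT : H →L[ℂ] H)
    (hS : IsSelfAdjoint S) (hT : IsSelfAdjoint T)
    (hScr : IsClosed (LinearMap.range (S : H →ₗ[ℂ] H) : Set H))
    (hTcr : IsClosed (LinearMap.range (T : H →ₗ[ℂ] H) : Set H))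
    -- PS, PT orthogonal projections onto ran S, ran T
    (hPS : IsSelfAdjoint PS) (hPS2 : PS ∘L PS = PS)
    (hPSran : LinearMap.range (PS : H →ₗ[ℂ] H) = LinearMap.range (S : H →ₗ[ℂ] H))
    (hPT : IsSelfAdjoint PT) (hPT2 : PT ∘L PT = PT)
    (hPTran : LinearMap.range (PT : H →ₗ[ℂ] H) = LinearMap.range (T : H →ₗ[ℂ] H))
    -- star order
    (hstar1 : S = PS ∘L T) (hstar2 : S = T ∘L PS)
    (hconv : ‖PT - T ∘L T‖ < 1) :
    ‖PS - S ∘L S‖ < 1 :=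
  MP_splitting_star_order_general S T PS PT hPS hPS2 hPSran hPT2 hPTran hstar1 hstar2 hconv
end
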